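/- Let p be a prime, m ≥ 1, and F a finite field with Fintype.card F = p^m and CharP F p; let α ∈ F generate the unit group Fˣ, and let f : F → ZMod (p^m − 1) satisfy α ^ (f x).val = x for all nonzero x ∈ F. Let x : Fin m → ZMod p satisfy x i ≠ 0 for every i. Then the function g : (Fin m → ZMod p) → ZMod (p^m − 1) given by g a = f (∑ i, ((x i * a i : ZMod p) : F) * α ^ (m − 1 − (i : ℕ))) has the periodic Costas property, where (· : F) denotes the canonical ring map ZMod p → F. -/

import Mathlib

/-!
The map `φ a = ∑ i, (x i * a i) • α ^ (m - 1 - i)` is additive and injective, because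
`1, α, …, α ^ (m - 1)` is a basis of `F` over `ZMod p` when `α` generates `Fˣ` and the weights `x i`
are nonzero. Exponentiating `f (φ (a + h)) - f (φ a) = f (φ (b + h)) - f (φ b)` gives
`(φ a + φ h) * φ b = (φ b + φ h) * φ a`, that is `φ h * φ b = φ h * φ a`, so `φ a = φ b` and `a = b`.
-/

/-- The periodic Costas (distinct difference) property for a multidimensional
array `g : (ℤ_p)^m → ℤ_{p^m - 1}`. -/
def PeriodicCostas (p m n : ℕ) (g : (Fin m → ZMod p) → ZMod n) : Prop :=
  ∀ h : Fin m → ZMod p, h ≠ 0 → ∀ a b : Fin m → ZMod p,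
    a ≠ 0 → b ≠ 0 → a + h ≠ 0 → b + h ≠ 0 →
    g (a + h) - g a = g (b + h) - g b → a = b

open Function IntermediateField Module

theorem pow_val_add_of_pow_eq_one {M : Type*} [Monoid M] {n : ℕ} [NeZero n] {α : M}
    (hα : α ^ n = 1) (u v : ZMod n) : α ^ (u + v).val = α ^ u.val * α ^ v.val := by
  rw [ZMod.val_add, ← pow_eq_pow_mod _ hα, pow_add]

theorem mul_eq_mul_of_log_sub_eq_sub {M : Type*} [CommMonoid M] {n : ℕ} [NeZero n] {α : M}
    (hα : α ^ n = 1) {f : M → ZMod n} {u v u' v' : M} (hu : α ^ (f u).val = u)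
    (hv : α ^ (f v).val = v) (hu' : α ^ (f u').val = u') (hv' : α ^ (f v').val = v')
    (h : f u - f v = f u' - f v') : u * v' = u' * v := by
  rw [sub_eq_sub_iff_add_eq_add] at h
  calc u * v' = α ^ (f u + f v').val := by rw [pow_val_add_of_pow_eq_one hα, hu, hv']
    _ = α ^ (f u' + f v).val := by rw [h]
    _ = u' * v := by rw [pow_val_add_of_pow_eq_one hα, hu', hv]

/-- In a two-element field `α = 0` generates the units; two distinct nonzero elements rule this
out, since the powers of `0` are `0` and `1`. -/
theorem ne_zero_of_forall_ne_zero_exists_pow_eq {M₀ : Type*} [MonoidWithZero M₀] {α : M₀}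
    (hα : ∀ y : M₀, y ≠ 0 → ∃ k : ℕ, α ^ k = y) {u v : M₀} (hu : u ≠ 0) (hv : v ≠ 0)
    (huv : u ≠ v) : α ≠ 0 := by
  rintro rfl
  have eq_one : ∀ y : M₀, y ≠ 0 → y = 1 := by
    intro y hy
    obtain ⟨k, rfl⟩ := hα y hy
    rcases k with _ | k
    · exact pow_zero _
    · exact absurd (zero_pow k.succ_ne_zero) hy
  exact huv ((eq_one u hu).trans (eq_one v hv).symm)

theorem periodicCostas_log_comp {p m n : ℕ} {F : Type*} [Field F] [Fintype F] {α : F}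
    (hn : n = Fintype.card F - 1) {f : F → ZMod n} (hf : ∀ y : F, y ≠ 0 → α ^ (f y).val = y)
    (φ : (Fin m → ZMod p) →+ F) (hφ : Injective φ) :
    PeriodicCostas p m n fun a => f (φ a) := by
  intro h hh a b ha hb hah hbh heq
  have hφ0 : ∀ c, c ≠ 0 → φ c ≠ 0 := fun c hc => (map_ne_zero_iff φ hφ).2 hc
  have hα : α ≠ 0 := ne_zero_of_forall_ne_zero_exists_pow_eq (fun y hy => ⟨_, hf y hy⟩)
    (hφ0 a ha) (hφ0 _ hah) (hφ.ne (by simpa using hh))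
  have : NeZero n := ⟨by have := Fintype.one_lt_card (α := F); omega⟩
  have hαn : α ^ n = 1 := hn ▸ FiniteField.pow_card_sub_one_eq_one α hα
  have hmul : (φ a + φ h) * φ b = (φ b + φ h) * φ a := by
    simpa only [map_add] using mul_eq_mul_of_log_sub_eq_sub hαn (hf _ (hφ0 _ hah))
      (hf _ (hφ0 _ ha)) (hf _ (hφ0 _ hbh)) (hf _ (hφ0 _ hb)) heq
  exact hφ (mul_left_cancel₀ (hφ0 h hh) (by linear_combination hmul)).symm

theorem adjoin_simple_eq_top_of_forall_ne_zero_exists_pow_eq {K L : Type*} [Field K] [Field L]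
    [Algebra K L] {α : L} (hα : ∀ y : L, y ≠ 0 → ∃ k : ℕ, α ^ k = y) : K⟮α⟯ = ⊤ := by
  refine eq_top_iff.2 fun y _ => ?_
  rcases eq_or_ne y 0 with rfl | hy
  · exact zero_mem _
  · obtain ⟨k, rfl⟩ := hα y hy
    exact pow_mem (mem_adjoin_simple_self K α) k

theorem linearIndependent_pow_rev_of_adjoin_eq_top {K L : Type*} [Field K] [Field L]
    [Algebra K L] [FiniteDimensional K L] {α : L} (hα : K⟮α⟯ = ⊤) {m : ℕ}
    (hm : finrank K L = m) : LinearIndependent K fun i : Fin m => α ^ (m - 1 - (i : ℕ)) := by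
  have hdeg : (minpoly K α).natDegree = m :=
    ((Field.primitive_element_iff_minpoly_natDegree_eq K α).1 hα).trans hm
  have hli := (linearIndependent_pow (K := K) α).comp (Fin.cast hdeg.symm ∘ Fin.rev)
    ((Fin.cast_injective _).comp Fin.rev_injective)
  convert hli using 2 with i
  simp only [comp_apply, Fin.val_cast, Fin.val_rev, Nat.sub_sub, Nat.add_comm 1]

theorem G1_general_welch_periodicCostas_general
    (p m : ℕ) (hp : p.Prime)
    (F : Type*) [Field F] [Fintype F] (hF : Fintype.card F = p ^ m) [CharP F p]
    (α : F) (hα : ∀ y : F, y ≠ 0 → ∃ k : ℕ, α ^ k = y)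
    (f : F → ZMod (p ^ m - 1))
    (hf : ∀ y : F, y ≠ 0 → α ^ (f y).val = y)
    (x : Fin m → ZMod p) (hx : ∀ i, x i ≠ 0) :
    PeriodicCostas p m (p ^ m - 1) (fun a =>
      f (∑ i, (ZMod.castHom (dvd_refl p) F (x i * a i)) * α ^ (m - 1 - (i : ℕ)))) := by
  have : Fact p.Prime := ⟨hp⟩
  let : Algebra (ZMod p) F := ZMod.algebra F p
  have hfinrank : finrank (ZMod p) F = m :=
    Nat.pow_right_injective hp.two_le <| show p ^ _ = p ^ _ by
      rw [FiniteField.pow_finrank_eq_card, hF]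
  have hli : LinearIndependent (ZMod p) fun i : Fin m => x i • α ^ (m - 1 - (i : ℕ)) :=
    (linearIndependent_pow_rev_of_adjoin_eq_top
      (adjoin_simple_eq_top_of_forall_ne_zero_exists_pow_eq hα) hfinrank).units_smul
      fun i => Units.mk0 (x i) (hx i)
  set φ := Fintype.linearCombination (ZMod p) fun i : Fin m => x i • α ^ (m - 1 - (i : ℕ))
  have hφ : ∀ a, ∑ i, ZMod.castHom (dvd_refl p) F (x i * a i) * α ^ (m - 1 - (i : ℕ)) = φ a :=
    fun a => by
      simp only [φ, Fintype.linearCombination_apply, smul_smul, mul_comm (a _)]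
      rfl
  simp only [hφ]
  exact periodicCostas_log_comp (by rw [hF]) hf φ.toAddMonoidHom
    hli.fintypeLinearCombination_injective

/-- Applying the multiplication permutation `G1` with multipliers `x` to the
`(m+1)`-dimensional periodic Welch Costas array over `(ℤ_p)^m` yields an array
with the periodic Costas property. -/
theorem G1_general_welch_periodicCostas
    (p m : ℕ) (hp : p.Prime) (hm : 1 ≤ m)
    (F : Type*) [Field F] [Fintype F] (hF : Fintype.card F = p ^ m) [CharP F p]
    (α : F) (hα : ∀ y : F, y ≠ 0 → ∃ k : ℕ, α ^ k = y)
    (f : F → ZMod (p ^ m - 1))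
    (hf : ∀ y : F, y ≠ 0 → α ^ (f y).val = y)
    (x : Fin m → ZMod p) (hx : ∀ i, x i ≠ 0) :
    PeriodicCostas p m (p ^ m - 1) (fun a =>
      f (∑ i, (ZMod.castHom (dvd_refl p) F (x i * a i)) * α ^ (m - 1 - (i : ℕ)))) :=
  G1_general_welch_periodicCostas_general p m hp F hF α hα f hf x hx
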